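/- arXiv:2203.06571 — 2 statements merged into one kernel-verified Lean document; each statement's English description precedes it below -/
import Mathlib

section
/- Let n ≥ 2 and let N₁,…,N_n be one-dimensional linear subspaces (lines) of ℝⁿ. Then the condition that (n−1)·dim V ≤ Σ_{j=1}^n (dim V − dim(V ∩ N_j)) holds for every linear subspace V of ℝⁿ is equivalent to N₁ + ⋯ + N_n = ℝⁿ. -/
open Module

lemma finrank_finset_sup_le {ι : Type*} {E : Type*} [AddCommGroup E] [Module ℝ E]
    [FiniteDimensional ℝ E] (s : Finset ι) (f : ι → Submodule ℝ E) :
    finrank ℝ ↥(s.sup f) ≤ ∑ i ∈ s, finrank ℝ (f i) := by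
  classical
  induction s using Finset.induction_on with
  | empty => simp
  | insert _ _ hi ih =>
    rename_i a s
    rw [Finset.sup_insert, Finset.sum_insert hi]
    exact le_trans (Submodule.finrank_add_le_finrank_add_finrank _ _) (by omega)

/-- **Transversality for Loomis–Whitney type data**: given lines `N₁, …, N_n` in `ℝⁿ`, the
condition `(n−1)·dim V ≤ ∑ⱼ (dim V − dim(V ∩ Nⱼ))` for every subspace `V` of `ℝⁿ` is
equivalent to `N₁ + ⋯ + N_n = ℝⁿ`. -/
theorem lines_transversality_iff_spanning (n : ℕ) (hn : 2 ≤ n)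
    (N : Fin n → Submodule ℝ (EuclideanSpace ℝ (Fin n)))
    (hline : ∀ j, finrank ℝ (N j) = 1) :
    (∀ V : Submodule ℝ (EuclideanSpace ℝ (Fin n)),
        (n - 1) * finrank ℝ V ≤ ∑ j, (finrank ℝ V - finrank ℝ ↥(V ⊓ N j)))
      ↔ (⨆ j, N j) = ⊤ := by
  classical
  have hdimE : finrank ℝ (EuclideanSpace ℝ (Fin n)) = n := by simp
  constructor
  · intro h
    set V : Submodule ℝ (EuclideanSpace ℝ (Fin n)) := ⨆ j, N j with hV
    have hle : ∀ j, N j ≤ V := fun j => le_iSup N j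
    have hinf : ∀ j, V ⊓ N j = N j := fun j => inf_eq_right.mpr (hle j)
    have hd1 : 1 ≤ finrank ℝ V := by
      have h0 : Fin n := ⟨0, by omega⟩
      calc 1 = finrank ℝ (N h0) := (hline h0).symm
        _ ≤ finrank ℝ V := Submodule.finrank_mono (hle h0)
    have hsum := h V
    have hre : ∑ j, (finrank ℝ V - finrank ℝ ↥(V ⊓ N j)) = n * (finrank ℝ V - 1) := by
      calc ∑ j, (finrank ℝ V - finrank ℝ ↥(V ⊓ N j))
          = ∑ _j : Fin n, (finrank ℝ V - 1) :=
            Finset.sum_congr rfl fun j _ => by rw [hinf j, hline j]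
        _ = n * (finrank ℝ V - 1) := by simp [mul_comm]
    rw [hre] at hsum
    set d := finrank ℝ V with hdd
    have hnd : n ≤ d := by
      obtain ⟨b, hb⟩ : ∃ b, d = b + 1 := ⟨d - 1, by omega⟩
      obtain ⟨a, ha⟩ : ∃ a, n = a + 2 := ⟨n - 2, by omega⟩
      rw [ha, hb] at hsum
      have h' : (a + 1) * (b + 1) ≤ (a + 2) * b := by simpa using hsum
      rw [ha, hb]
      nlinarith
    apply Submodule.eq_top_of_finrank_eq
    rw [hdimE]
    have : d ≤ n := hdimE ▸ Submodule.finrank_le V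
    omega
  · intro h V
    set d := finrank ℝ V with hdd
    -- each intersection has rank 0 or 1
    have hle1 : ∀ j, finrank ℝ ↥(V ⊓ N j) ≤ 1 := fun j =>
      (hline j) ▸ Submodule.finrank_mono inf_le_right
    -- S = set of j with N j ≤ V
    set S : Finset (Fin n) := Finset.univ.filter (fun j => finrank ℝ ↥(V ⊓ N j) = 1) with hS
    have hSle : ∀ j ∈ S, N j ≤ V := by
      intro j hj
      rw [hS, Finset.mem_filter] at hj
      have : V ⊓ N j = N j := by
        apply Submodule.eq_of_le_of_finrank_le inf_le_right
        rw [hline j, hj.2]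
      exact this ▸ inf_le_left
    -- key: card S ≤ d
    have hkey : S.card ≤ d := by
      have htop : (⊤ : Submodule ℝ (EuclideanSpace ℝ (Fin n))) ≤ V ⊔ Sᶜ.sup N := by
        rw [← h]
        apply iSup_le
        intro j
        by_cases hj : j ∈ S
        · exact le_sup_of_le_left (hSle j hj)
        · exact le_sup_of_le_right (Finset.le_sup (by simpa using hj))
      have h1 : n ≤ finrank ℝ ↥(V ⊔ Sᶜ.sup N) := by
        calc n = finrank ℝ (⊤ : Submodule ℝ (EuclideanSpace ℝ (Fin n))) := by
                simp [finrank_top, hdimE]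
          _ ≤ _ := Submodule.finrank_mono htop
      have h2 : finrank ℝ ↥(V ⊔ Sᶜ.sup N) ≤ d + Sᶜ.card := by
        calc finrank ℝ ↥(V ⊔ Sᶜ.sup N)
            ≤ d + finrank ℝ ↥(Sᶜ.sup N) :=
              Submodule.finrank_add_le_finrank_add_finrank _ _
          _ ≤ d + ∑ j ∈ Sᶜ, finrank ℝ (N j) := by
              have := finrank_finset_sup_le Sᶜ N
              omega
          _ = d + Sᶜ.card := by simp [hline]
      have h3 : S.card + Sᶜ.card = n := by
        rw [Finset.card_compl]
        simp only [Fintype.card_fin]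
        have := Finset.card_le_univ S
        simp only [Finset.card_univ, Fintype.card_fin] at this
        omega
      omega
    -- sum of intersection ranks = card S
    have hsum : ∑ j, finrank ℝ ↥(V ⊓ N j) = S.card := by
      rw [hS, Finset.card_filter]
      apply Finset.sum_congr rfl
      intro j _
      have h5 := hle1 j
      by_cases hj : finrank ℝ ↥(V ⊓ N j) = 1
      · simp [hj]
      · rw [if_neg hj]
        omega
    have hterm : ∀ j ∈ Finset.univ, finrank ℝ ↥(V ⊓ N j) ≤ d := fun j _ =>
      Submodule.finrank_mono inf_le_left
    have hsub : ∑ j, (d - finrank ℝ ↥(V ⊓ N j)) = n * d - ∑ j, finrank ℝ ↥(V ⊓ N j) := by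
      rw [Finset.sum_tsub_distrib _ hterm]
      simp [mul_comm]
    rw [hsub, hsum]
    have hsn : S.card ≤ n := by
      have := Finset.card_le_univ S
      simpa using this
    have : S.card * 1 ≤ n * d ∨ True := Or.inr trivial
    -- (n-1)*d ≤ n*d - S.card given S.card ≤ d, d ≤ n*d
    have hdn : d ≤ n * d := Nat.le_mul_of_pos_left d (by omega)
    have h4 : (n - 1) * d = n * d - d := by
      cases n with
      | zero => omega
      | succ m => rw [Nat.succ_sub_one, Nat.succ_mul]; omega
    omega
end

section
/- Let V be a linear subspace of ℝⁿ and let L : ℝⁿ → ℝ^k be a linear map. Then there exists c > 0 (depending only on the operator norm of L) such that for every δ ∈ (0,1], every ξ ∈ ℝ^k lying in the closed δ-neighbourhood of (LV)^⊥ ∩ B(0, δ^{1/2}), and every x ∈ ℝⁿ lying in the closed cδ^{−1/2}-neighbourhood of V ∩ B(0, cδ^{−1}), one has |⟨Lx, ξ⟩| ≤ 1/10. -/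
open MeasureTheory Metric Module Set

set_option maxHeartbeats 800000 in
/-- **The first Knapp-type estimate**: given a subspace `V` of `ℝⁿ` and a linear map
`L : ℝⁿ → ℝ^k`, there exists `c > 0` such that for every `δ ∈ (0,1]`, every `ξ` in the closed
`δ`-neighbourhood of `(LV)^⊥ ∩ B(0,δ^{1/2})` and every `x` in the closed
`cδ^{−1/2}`-neighbourhood of `V ∩ B(0,cδ^{−1})`, one has `|⟨Lx, ξ⟩| ≤ 1/10`. -/
theorem knapp_linear_estimate (n k : ℕ) (V : Submodule ℝ (EuclideanSpace ℝ (Fin n)))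
    (L : EuclideanSpace ℝ (Fin n) →ₗ[ℝ] EuclideanSpace ℝ (Fin k)) :
    ∃ c : ℝ, 0 < c ∧ ∀ δ : ℝ, δ ∈ Set.Ioc (0 : ℝ) 1 →
      ∀ ξ ∈ cthickening δ
          (((V.map L : Submodule ℝ (EuclideanSpace ℝ (Fin k)))ᗮ : Set (EuclideanSpace ℝ (Fin k)))
            ∩ closedBall 0 (Real.sqrt δ)),
      ∀ x ∈ cthickening (c / Real.sqrt δ)
          ((V : Set (EuclideanSpace ℝ (Fin n))) ∩ closedBall 0 (c / δ)),
      |(inner ℝ (L x) ξ : ℝ)| ≤ 1 / 10 := by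
  set Lc := LinearMap.toContinuousLinearMap L with hLc
  set M := ‖Lc‖ with hM
  have hM0 : 0 ≤ M := norm_nonneg _
  refine ⟨1 / (100 * (M + 1)), by positivity, ?_⟩
  rintro δ ⟨hδ0, hδ1⟩ ξ hξ x hx
  set c := 1 / (100 * (M + 1)) with hc
  have hc0 : 0 < c := by positivity
  have hsδ : 0 < Real.sqrt δ := Real.sqrt_pos.2 hδ0
  -- extract nearest points
  have hS1 : IsCompact (((V.map L : Submodule ℝ (EuclideanSpace ℝ (Fin k)))ᗮ :
      Set (EuclideanSpace ℝ (Fin k))) ∩ closedBall 0 (Real.sqrt δ)) :=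
    (isCompact_closedBall 0 _).inter_left (Submodule.isClosed_orthogonal _)
  have hS1ne : (((V.map L : Submodule ℝ (EuclideanSpace ℝ (Fin k)))ᗮ :
      Set (EuclideanSpace ℝ (Fin k))) ∩ closedBall 0 (Real.sqrt δ)).Nonempty :=
    ⟨0, Submodule.zero_mem _, by simp [hsδ.le]⟩
  have hS2 : IsCompact ((V : Set (EuclideanSpace ℝ (Fin n))) ∩ closedBall 0 (c / δ)) :=
    (isCompact_closedBall 0 _).inter_left (Submodule.closed_of_finiteDimensional V)
  have hS2ne : ((V : Set (EuclideanSpace ℝ (Fin n))) ∩ closedBall 0 (c / δ)).Nonempty :=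
    ⟨0, Submodule.zero_mem _, by simp [le_of_lt (by positivity : (0:ℝ) < c / δ)]⟩
  obtain ⟨ξ₀, hξ₀mem, hξ₀d⟩ := hS1.exists_infDist_eq_dist hS1ne ξ
  obtain ⟨x₀, hx₀mem, hx₀d⟩ := hS2.exists_infDist_eq_dist hS2ne x
  have hξd : dist ξ ξ₀ ≤ δ := by
    rw [← hξ₀d, Metric.infDist]
    exact ENNReal.toReal_le_of_le_ofReal hδ0.le (mem_cthickening_iff.1 hξ)
  have hxd : dist x x₀ ≤ c / Real.sqrt δ := by
    rw [← hx₀d, Metric.infDist]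
    exact ENNReal.toReal_le_of_le_ofReal (by positivity) (mem_cthickening_iff.1 hx)
  obtain ⟨hξ₀V, hξ₀b⟩ := hξ₀mem
  obtain ⟨hx₀V, hx₀b⟩ := hx₀mem
  have hξ₀n : ‖ξ₀‖ ≤ Real.sqrt δ := by simpa using hξ₀b
  have hx₀n : ‖x₀‖ ≤ c / δ := by simpa using hx₀b
  have hLeq : ∀ v, L v = Lc v := fun v => rfl
  have horth : (inner ℝ (L x₀) ξ₀ : ℝ) = 0 :=
    Submodule.inner_right_of_mem_orthogonal (Submodule.mem_map_of_mem hx₀V) hξ₀V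
  have hsplit : (inner ℝ (L x) ξ : ℝ) =
      inner ℝ (L (x - x₀)) ξ + inner ℝ (L x₀) (ξ - ξ₀) + inner ℝ (L x₀) ξ₀ := by
    rw [map_sub]
    simp only [inner_sub_left, inner_sub_right]
    ring
  have hξn : ‖ξ‖ ≤ 2 * Real.sqrt δ := by
    have h1 : ‖ξ‖ ≤ ‖ξ - ξ₀‖ + ‖ξ₀‖ := by
      calc ‖ξ‖ = ‖(ξ - ξ₀) + ξ₀‖ := by rw [sub_add_cancel]
        _ ≤ ‖ξ - ξ₀‖ + ‖ξ₀‖ := norm_add_le _ _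
    have h2 : ‖ξ - ξ₀‖ ≤ δ := by rwa [← dist_eq_norm]
    have h4 : Real.sqrt δ ≤ 1 := Real.sqrt_le_one.2 hδ1
    have h3 : δ ≤ Real.sqrt δ := by
      nlinarith [Real.sq_sqrt hδ0.le, hsδ]
    linarith
  have e1 : |(inner ℝ (L (x - x₀)) ξ : ℝ)| ≤ M * (c / Real.sqrt δ) * (2 * Real.sqrt δ) := by
    calc |(inner ℝ (L (x - x₀)) ξ : ℝ)| ≤ ‖L (x - x₀)‖ * ‖ξ‖ := abs_real_inner_le_norm _ _
      _ ≤ (M * ‖x - x₀‖) * ‖ξ‖ := by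
          gcongr
          exact (hLeq _) ▸ Lc.le_opNorm _
      _ ≤ M * (c / Real.sqrt δ) * (2 * Real.sqrt δ) := by
          have : ‖x - x₀‖ ≤ c / Real.sqrt δ := by rwa [← dist_eq_norm]
          gcongr
  have e2 : |(inner ℝ (L x₀) (ξ - ξ₀) : ℝ)| ≤ M * (c / δ) * δ := by
    calc |(inner ℝ (L x₀) (ξ - ξ₀) : ℝ)| ≤ ‖L x₀‖ * ‖ξ - ξ₀‖ := abs_real_inner_le_norm _ _
      _ ≤ (M * ‖x₀‖) * ‖ξ - ξ₀‖ := by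
          gcongr
          exact (hLeq _) ▸ Lc.le_opNorm _
      _ ≤ M * (c / δ) * δ := by
          have h2 : ‖ξ - ξ₀‖ ≤ δ := by rw [← dist_eq_norm]; exact hξd
          gcongr
  have key1 : M * (c / Real.sqrt δ) * (2 * Real.sqrt δ) = 2 * M * c := by
    field_simp
  have key2 : M * (c / δ) * δ = M * c := by field_simp
  have hMc : 3 * (M * c) ≤ 3 / 100 := by
    have hpos : (0:ℝ) < 100 * (M + 1) := by positivity
    rw [show 3 * (M * c) = 3 * M / (100 * (M + 1)) by rw [hc]; ring,
      div_le_div_iff₀ hpos (by norm_num)]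
    nlinarith
  calc |(inner ℝ (L x) ξ : ℝ)| = |inner ℝ (L (x - x₀)) ξ + inner ℝ (L x₀) (ξ - ξ₀) +
        (inner ℝ (L x₀) ξ₀ : ℝ)| := by rw [hsplit]
    _ ≤ |(inner ℝ (L (x - x₀)) ξ : ℝ)| + |(inner ℝ (L x₀) (ξ - ξ₀) : ℝ)| +
        |(inner ℝ (L x₀) ξ₀ : ℝ)| := by
          exact (abs_add_le _ _).trans (by gcongr; exact abs_add_le _ _)
    _ ≤ 2 * M * c + M * c + 0 := by
          rw [horth, abs_zero]
          rw [key1] at e1; rw [key2] at e2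
          gcongr
    _ ≤ 1 / 10 := by linarith
end
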